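/- arXiv:1402.1414 — 2 statements merged into one kernel-verified Lean document; each statement's English description precedes it below -/
import Mathlib

section
/- Let γ ∈ (0,1), let m ≥ 1 be an integer, set t_l = l/m, and let N ≥ 2 be an integer, b = t_N. Let g : [0, t_N] → ℝ be a step function with g(s) = g(t_{l−1}) for all s ∈ [t_{l−1}, t_l), 1 ≤ l ≤ N. Then for every integer k with 1 ≤ k ≤ N−1 and every s ∈ (t_{k−1}, t_k): D_{b−}^{1−γ} g_{b−}(s) = (1/Γ(γ)) [ (g(t_{k−1}) − g(t_{N−1})) (t_N − s)^{γ−1} − Σ_{l=k+1}^{N} (g(t_{k−1}) − g(t_{l−1})) ( (t_l − s)^{γ−1} − (t_{l−1} − s)^{γ−1} ) ]. -/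
open MeasureTheory intervalIntegral

noncomputable def Dright (γ b gb : ℝ) (g : ℝ → ℝ) (s : ℝ) : ℝ :=
  (1 / Real.Gamma γ) *
    ((g s - gb) / (b - s) ^ (1 - γ) + (1 - γ) * ∫ y in s..b, (g s - g y) / (y - s) ^ (2 - γ))

/-
On `(s, t_k)` the integrand vanishes, because `g` equals `g s` there. On every later cell
`(t_j, t_{j+1})` the numerator is the constant `g s - g t_j`, and
`∫ (y - s) ^ (γ - 2) = ((t_{j+1} - s) ^ (γ - 1) - (t_j - s) ^ (γ - 1)) / (γ - 1)`
on that cell, where `γ - 1` cancels against the prefactor `1 - γ`.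
-/

open Set

section CongrIoo

variable {E : Type*} [NormedAddCommGroup E] {f f' : ℝ → E} {a b : ℝ}

theorem intervalIntegral.integral_congr_Ioo [NormedSpace ℝ E] (hab : a ≤ b)
    (h : EqOn f f' (Ioo a b)) : ∫ x in a..b, f x = ∫ x in a..b, f' x := by
  simp only [integral_of_le hab, integral_Ioc_eq_integral_Ioo]
  exact setIntegral_congr_fun measurableSet_Ioo h

theorem IntervalIntegrable.congr_Ioo (hab : a ≤ b) (h : EqOn f f' (Ioo a b))
    (hf : IntervalIntegrable f volume a b) : IntervalIntegrable f' volume a b := by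
  rw [intervalIntegrable_iff_integrableOn_Ioo_of_le hab] at hf ⊢
  exact hf.congr_fun h measurableSet_Ioo

end CongrIoo

theorem integral_sub_rpow {r s p q : ℝ} (hr : r ≠ -1) (hs : s ∉ uIcc p q) :
    ∫ y in p..q, (y - s) ^ r = ((q - s) ^ (r + 1) - (p - s) ^ (r + 1)) / (r + 1) := by
  rw [integral_comp_sub_right (fun y => y ^ r) s, integral_rpow (Or.inr ⟨hr, ?_⟩)]
  simpa [mem_uIcc, sub_nonneg, sub_nonpos, and_comm, or_comm] using hs

section StepKernel

variable {g : ℝ → ℝ} {γ s p q c d : ℝ}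

theorem eqOn_div_rpow_of_eqOn (hsp : s ≤ p) (hg : ∀ y ∈ Ioo p q, g y = c) :
    EqOn (fun y => (d - g y) / (y - s) ^ (2 - γ)) (fun y => (d - c) * (y - s) ^ (γ - 2))
      (Ioo p q) := by
  intro y hy
  have hys : 0 ≤ y - s := by linarith [hy.1]
  dsimp only
  rw [hg y hy, show γ - 2 = -(2 - γ) by ring, Real.rpow_neg hys, div_eq_mul_inv]

theorem intervalIntegrable_div_rpow_of_eqOn (hsp : s < p) (hpq : p ≤ q)
    (hg : ∀ y ∈ Ioo p q, g y = c) :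
    IntervalIntegrable (fun y => (d - g y) / (y - s) ^ (2 - γ)) volume p q := by
  refine IntervalIntegrable.congr_Ioo hpq (eqOn_div_rpow_of_eqOn hsp.le hg).symm ?_
  refine ContinuousOn.intervalIntegrable fun y hy => ?_
  rw [uIcc_of_le hpq] at hy
  have hys : y - s ≠ 0 := by linarith [hy.1]
  exact ((continuous_sub_right s).continuousAt.rpow_const (Or.inl hys)).const_mul _
    |>.continuousWithinAt

theorem integral_div_rpow_of_eqOn (hγ : γ ≠ 1) (hsp : s < p) (hpq : p ≤ q)
    (hg : ∀ y ∈ Ioo p q, g y = c) :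
    ∫ y in p..q, (d - g y) / (y - s) ^ (2 - γ)
      = (d - c) * (((q - s) ^ (γ - 1) - (p - s) ^ (γ - 1)) / (γ - 1)) := by
  have hs : s ∉ uIcc p q := by rw [uIcc_of_le hpq]; exact fun h => hsp.not_ge h.1
  rw [integral_congr_Ioo hpq (eqOn_div_rpow_of_eqOn hsp.le hg),
    intervalIntegral.integral_const_mul, integral_sub_rpow (by contrapose! hγ; linarith) hs,
    show γ - 2 + 1 = γ - 1 by ring]

theorem integral_div_rpow_eq_zero (hsq : s ≤ q) (hg : ∀ y ∈ Ioo s q, g y = d) :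
    ∫ y in s..q, (d - g y) / (y - s) ^ (2 - γ) = 0 := by
  rw [integral_congr_Ioo hsq (eqOn_div_rpow_of_eqOn le_rfl hg)]
  simp

theorem intervalIntegrable_div_rpow_of_eq (hsq : s ≤ q) (hg : ∀ y ∈ Ioo s q, g y = d) :
    IntervalIntegrable (fun y => (d - g y) / (y - s) ^ (2 - γ)) volume s q :=
  IntervalIntegrable.congr_Ioo hsq (eqOn_div_rpow_of_eqOn le_rfl hg).symm (by simp)

theorem integral_step_div_rpow {t e : ℕ → ℝ} (ht : Monotone t) {k n : ℕ} (hkn : k ≤ n)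
    (hγ : γ ≠ 1) (hs : s < t k) (hg₀ : ∀ y ∈ Ioo s (t k), g y = d)
    (hg : ∀ j ∈ Ico k n, ∀ y ∈ Ioo (t j) (t (j + 1)), g y = e j) :
    ∫ y in s..t n, (d - g y) / (y - s) ^ (2 - γ)
      = ∑ j ∈ Finset.Ico k n,
          (d - e j) * (((t (j + 1) - s) ^ (γ - 1) - (t j - s) ^ (γ - 1)) / (γ - 1)) := by
  have hpiece : ∀ j ∈ Ico k n, s < t j ∧ t j ≤ t (j + 1) := fun j hj =>
    ⟨hs.trans_le (ht hj.1), ht j.le_succ⟩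
  have hint : ∀ j ∈ Ico k n, IntervalIntegrable
      (fun y => (d - g y) / (y - s) ^ (2 - γ)) volume (t j) (t (j + 1)) := fun j hj =>
    intervalIntegrable_div_rpow_of_eqOn (hpiece j hj).1 (hpiece j hj).2 (hg j hj)
  rw [← integral_add_adjacent_intervals (intervalIntegrable_div_rpow_of_eq hs.le hg₀)
      (IntervalIntegrable.trans_iterate_Ico hkn hint),
    integral_div_rpow_eq_zero hs.le hg₀, zero_add,
    ← sum_integral_adjacent_intervals_Ico hkn hint]
  refine Finset.sum_congr rfl fun j hj => ?_
  replace hj : j ∈ Ico k n := Finset.mem_Ico.1 hj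
  exact integral_div_rpow_of_eqOn hγ (hpiece j hj).1 (hpiece j hj).2 (hg j hj)

end StepKernel

theorem stmt_7_general (γ : ℝ) (hγ1 : γ < 1) (m N : ℕ)
    (g : ℝ → ℝ)
    (hg : ∀ l : ℕ, 1 ≤ l → l ≤ N →
      ∀ x ∈ Set.Ico (((l : ℝ) - 1) / m) ((l : ℝ) / m), g x = g (((l : ℝ) - 1) / m))
    (k : ℕ) (hk1 : 1 ≤ k) (hkN : k ≤ N - 1)
    (s : ℝ) (hs : s ∈ Set.Ioo (((k : ℝ) - 1) / m) ((k : ℝ) / m)) :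
    Dright γ ((N : ℝ) / m) (g (((N : ℝ) - 1) / m)) g s =
      (1 / Real.Gamma γ) *
        ((g (((k : ℝ) - 1) / m) - g (((N : ℝ) - 1) / m)) * ((N : ℝ) / m - s) ^ (γ - 1)
          - ∑ l ∈ Finset.Icc (k + 1) N,
              (g (((k : ℝ) - 1) / m) - g (((l : ℝ) - 1) / m)) *
                (((l : ℝ) / m - s) ^ (γ - 1) - (((l : ℝ) - 1) / m - s) ^ (γ - 1))) := by
  have ht : Monotone fun j : ℕ => (j : ℝ) / m := fun i j hij => by dsimp only; gcongr
  have hgs : g s = g (((k : ℝ) - 1) / m) := hg k hk1 (by omega) s (Ioo_subset_Ico_self hs)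
  have hg₀ : ∀ y ∈ Ioo s ((k : ℝ) / m), g y = g s := fun y hy =>
    (hg k hk1 (by omega) y ⟨(hs.1.trans hy.1).le, hy.2⟩).trans hgs.symm
  have hstep : ∀ j ∈ Ico k N, ∀ y ∈ Ioo ((j : ℝ) / m) (((j + 1 : ℕ) : ℝ) / m),
      g y = g ((j : ℝ) / m) := by
    intro j hj y hy
    have := hg (j + 1) (by omega) hj.2 y
    simp only [Nat.cast_add_one, add_sub_cancel_right] at this hy
    exact this (Ioo_subset_Ico_self hy)
  have hb : 0 < (N : ℝ) / m - s := by
    have : (k : ℝ) / m ≤ N / m := ht (by omega)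
    linarith [hs.2]
  unfold Dright
  rw [integral_step_div_rpow ht (k := k) (n := N) (by omega) hγ1.ne hs.2 hg₀ hstep, hgs,
    div_eq_mul_inv _ (_ ^ (1 - γ)), ← Real.rpow_neg hb.le, neg_sub,
    ← Finset.Ico_add_one_right_eq_Icc, ← Finset.sum_Ico_add']
  have hγ : γ - 1 ≠ 0 := sub_ne_zero.2 hγ1.ne
  rw [sub_eq_add_neg _ (Finset.sum _ _), Finset.mul_sum, ← Finset.sum_neg_distrib]
  congr 2
  refine Finset.sum_congr rfl fun j _ => ?_
  push_cast [add_sub_cancel_right]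
  field_simp
  ring

/-- For a step function `g` constant on each `[t_{l-1}, t_l)` with `t_l = l/m`, `b = t_N`,
for `1 ≤ k ≤ N-1` and `s ∈ (t_{k-1}, t_k)`:
`D_{b-}^{1-γ} g_{b-}(s) = (1/Γ(γ)) [ (g(t_{k-1}) - g(t_{N-1})) (t_N - s)^{γ-1}
  - ∑_{l=k+1}^N (g(t_{k-1}) - g(t_{l-1})) ((t_l - s)^{γ-1} - (t_{l-1} - s)^{γ-1}) ]`. -/
theorem stmt_7 (γ : ℝ) (hγ0 : 0 < γ) (hγ1 : γ < 1) (m N : ℕ) (hm : 1 ≤ m) (hN : 2 ≤ N)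
    (g : ℝ → ℝ)
    (hg : ∀ l : ℕ, 1 ≤ l → l ≤ N →
      ∀ x ∈ Set.Ico (((l : ℝ) - 1) / m) ((l : ℝ) / m), g x = g (((l : ℝ) - 1) / m))
    (k : ℕ) (hk1 : 1 ≤ k) (hkN : k ≤ N - 1)
    (s : ℝ) (hs : s ∈ Set.Ioo (((k : ℝ) - 1) / m) ((k : ℝ) / m)) :
    Dright γ ((N : ℝ) / m) (g (((N : ℝ) - 1) / m)) g s =
      (1 / Real.Gamma γ) *
        ((g (((k : ℝ) - 1) / m) - g (((N : ℝ) - 1) / m)) * ((N : ℝ) / m - s) ^ (γ - 1)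
          - ∑ l ∈ Finset.Icc (k + 1) N,
              (g (((k : ℝ) - 1) / m) - g (((l : ℝ) - 1) / m)) *
                (((l : ℝ) / m - s) ^ (γ - 1) - (((l : ℝ) - 1) / m - s) ^ (γ - 1))) :=
  stmt_7_general γ hγ1 m N g hg k hk1 hkN s hs
end

section
/- Let T > 0 and α ∈ (1/2, 1]. Let (Ω, F, P) be a probability space and, for each integer m ≥ 1, let ξ_{1,m}, …, ξ_{⌊mT⌋,m} be random variables satisfying condition (H2): there is a constant C₀ > 0 (independent of m) with E[|Σ_{i=j+1}^{k} ξ_{i,m}|^4] ≤ C₀ ((k−j)/m)² for all 0 ≤ j < k ≤ ⌊mT⌋. Let f : Ω × [0,T] → ℝ be such that f(·, t) is measurable for each t and, for P-almost every ω, the path f(ω, ·) is α-Hölder continuous on [0,T]. Define R_{n,m}(t) = Σ_{j=1}^{⌊nt⌋} Σ_{i ∈ I_n(j)} (f(·, t_i) − f(·, u_{j−1})) ξ_{i,m}. Then for every ε > 0: lim_{n→∞} limsup_{m→∞, m ≥ n} P( sup_{t ∈ [0,T]} |R_{n,m}(t)| > ε ) = 0. -/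
/-!
Off an event of small probability the paths of `f` are `K`-Hölder at the rational points of
`[0, T]`. On that event the block sum over `I_n(j)` is controlled in `L¹` by chaining: split the
block into two halves; the cross term is a Hölder increment of size `ℓ^α` times a partial sum of
the `ξ`'s, whose `L¹` norm is at most `C₀^(1/4) ℓ^(1/2)` by (H2). Iterating, a geometric series
in `(2/3)^(α - 1/2)` gives the bound `c K ℓ^(α + 1/2)` with `ℓ ≈ 1/n`, so summing over the
`⌊nT⌋` blocks yields `E[sup_t |R_{n,m}(t)|; A_K] ≲ K n^(1/2 - α)` uniformly in `m ≥ n`, which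
tends to `0` as `α > 1/2`. Markov's inequality concludes.
-/

open MeasureTheory Finset Filter Topology
open scoped ENNReal

theorem lintegral_enorm_le_of_lintegral_pow_four_le {Ω : Type*} [MeasurableSpace Ω]
    {μ : Measure Ω} [IsProbabilityMeasure μ] {g : Ω → ℝ} (hg : AEStronglyMeasurable g μ)
    {C x : ℝ} (hC : 0 ≤ C) (hx : 0 ≤ x)
    (h4 : ∫⁻ ω, ENNReal.ofReal (|g ω| ^ 4) ∂μ ≤ ENNReal.ofReal (C * x ^ 2)) :
    ∫⁻ ω, ‖g ω‖ₑ ∂μ ≤ ENNReal.ofReal (C ^ (1 / 4 : ℝ) * x ^ (1 / 2 : ℝ)) := by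
  have h4' : ∫⁻ ω, ‖g ω‖ₑ ^ (4 : ℝ) ∂μ = ∫⁻ ω, ENNReal.ofReal (|g ω| ^ 4) ∂μ := by
    refine lintegral_congr fun ω => ?_
    rw [Real.enorm_eq_ofReal_abs, ENNReal.ofReal_rpow_of_nonneg (abs_nonneg _) (by norm_num)]
    norm_cast
  have hroot : (C * x ^ 2) ^ (1 / 4 : ℝ) = C ^ (1 / 4 : ℝ) * x ^ (1 / 2 : ℝ) := by
    rw [Real.mul_rpow hC (by positivity), ← Real.rpow_natCast, ← Real.rpow_mul hx]
    norm_num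
  calc ∫⁻ ω, ‖g ω‖ₑ ∂μ = eLpNorm g 1 μ := eLpNorm_one_eq_lintegral_enorm.symm
    _ ≤ eLpNorm g 4 μ := eLpNorm_le_eLpNorm_of_exponent_le (by norm_num) hg
    _ = (∫⁻ ω, ENNReal.ofReal (|g ω| ^ 4) ∂μ) ^ (1 / 4 : ℝ) := by
      rw [eLpNorm_eq_lintegral_rpow_enorm_toReal (by norm_num) (by norm_num), ← h4']
      norm_num
    _ ≤ ENNReal.ofReal (C * x ^ 2) ^ (1 / 4 : ℝ) := ENNReal.rpow_le_rpow h4 (by norm_num)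
    _ = _ := by rw [ENNReal.ofReal_rpow_of_nonneg (by positivity) (by norm_num), hroot]

theorem sum_sub_mul_eq_sum_sub_mul_add {ι R : Type*} [CommRing R] (s : Finset ι) (x y : ι → R)
    (c d : R) :
    ∑ i ∈ s, (x i - c) * y i = ∑ i ∈ s, (x i - d) * y i + (d - c) * ∑ i ∈ s, y i := by
  rw [mul_sum, ← sum_add_distrib]
  exact sum_congr rfl fun i _ => by ring

theorem sum_Ioc_sub_mul_split {R : Type*} [CommRing R] (x y : ℕ → R) {u w v : ℕ}
    (huw : u ≤ w) (hwv : w ≤ v) :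
    ∑ i ∈ Ioc u v, (x i - x (u + 1)) * y i =
      ∑ i ∈ Ioc u w, (x i - x (u + 1)) * y i + ∑ i ∈ Ioc w v, (x i - x (w + 1)) * y i
        + (x (w + 1) - x (u + 1)) * ∑ i ∈ Ioc w v, y i := by
  rw [← sum_Ioc_consecutive _ huw hwv, sum_sub_mul_eq_sum_sub_mul_add (Ioc w v) x y _ (x (w + 1))]
  ring

/-- `∑ₖ θᵏ` for `θ = (2/3)^(a-1)`: halving a block of length `ℓ` leaves two parts of length at most
`2ℓ/3`, so each level of the chaining gains the factor `θ`. -/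
noncomputable def chainingConst (a : ℝ) : ℝ := (1 - (2 / 3 : ℝ) ^ (a - 1))⁻¹

theorem one_lt_chainingConst {a : ℝ} (ha : 1 < a) : 1 < chainingConst a := by
  have hθ : (2 / 3 : ℝ) ^ (a - 1) < 1 := Real.rpow_lt_one (by norm_num) (by norm_num) (by linarith)
  have hθ0 : 0 < (2 / 3 : ℝ) ^ (a - 1) := by positivity
  exact one_lt_inv_iff₀.mpr ⟨by linarith, by linarith⟩

theorem chainingConst_split_le {α γ x y : ℝ} (hα : 0 ≤ α) (hγ : 0 ≤ γ) (hαγ : 1 < α + γ)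
    (hx : 0 < x) (hy : 0 < y) (hx2 : x ≤ 2 / 3 * (x + y)) (hy2 : y ≤ 2 / 3 * (x + y)) :
    chainingConst (α + γ) * x ^ (α + γ) + chainingConst (α + γ) * y ^ (α + γ) + x ^ α * y ^ γ
      ≤ chainingConst (α + γ) * (x + y) ^ (α + γ) := by
  set a := α + γ
  set θ : ℝ := (2 / 3 : ℝ) ^ (a - 1)
  have hθ : θ < 1 := Real.rpow_lt_one (by norm_num) (by norm_num) (by linarith)
  have hs : 0 < x + y := by linarith
  have hκ : chainingConst a * θ + 1 = chainingConst a := by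
    have hne : 1 - θ ≠ 0 := by linarith
    show (1 - θ)⁻¹ * θ + 1 = (1 - θ)⁻¹
    field_simp
    ring
  have hpart : ∀ z, 0 < z → z ≤ 2 / 3 * (x + y) → z ^ a ≤ θ * (x + y) ^ (a - 1) * z := by
    intro z hz hz2
    rw [show z ^ a = z ^ (a - 1) * z by rw [← Real.rpow_add_one hz.ne']; ring_nf]
    gcongr
    rw [← Real.mul_rpow (by norm_num) hs.le]
    gcongr
  have hcross : x ^ α * y ^ γ ≤ (x + y) ^ a := by
    rw [Real.rpow_add hs]
    gcongr <;> linarith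
  have hκ0 : 0 ≤ chainingConst a := (zero_lt_one.trans (one_lt_chainingConst hαγ)).le
  have hxy : (x + y) ^ a = (x + y) ^ (a - 1) * (x + y) := by
    rw [← Real.rpow_add_one hs.ne']; ring_nf
  calc chainingConst a * x ^ a + chainingConst a * y ^ a + x ^ α * y ^ γ
      ≤ chainingConst a * (θ * (x + y) ^ (a - 1) * x)
          + chainingConst a * (θ * (x + y) ^ (a - 1) * y) + (x + y) ^ a := by
        gcongr
        exacts [hpart x hx hx2, hpart y hy hy2]
    _ = (chainingConst a * θ + 1) * (x + y) ^ a := by rw [hxy]; ring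
    _ = chainingConst a * (x + y) ^ a := by rw [hκ]

theorem filter_Icc_div_mem_Ico_eq_Ioc {m : ℕ} (hm : 0 < m) (M : ℕ) (a b : ℝ) :
    ∃ p q : ℕ, (Icc 1 M).filter (fun i : ℕ => a ≤ (i : ℝ) / m ∧ (i : ℝ) / m < b) = Ioc p q := by
  have hm' : (0 : ℝ) < m := by exact_mod_cast hm
  refine ⟨max 1 ⌈a * m⌉₊ - 1, min M (⌈b * m⌉₊ - 1), ?_⟩
  ext i
  simp only [mem_filter, mem_Icc, mem_Ioc, le_div_iff₀ hm', div_lt_iff₀ hm', ← Nat.ceil_le,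
    ← Nat.lt_ceil]
  omega

section Chaining

variable {Ω : Type*} [MeasurableSpace Ω] {ν : Measure Ω} {X ξ : ℕ → Ω → ℝ} {m M : ℕ}
  {α γ K C : ℝ}

theorem lintegral_enorm_sum_Ioc_sub_mul_le (hX : ∀ i, Measurable (X i))
    (hξ : ∀ i, Measurable (ξ i)) (hm : 0 < m) (hα : 0 ≤ α) (hγ : 0 ≤ γ) (hαγ : 1 < α + γ)
    (hK : 0 ≤ K) (hC : 0 ≤ C)
    (hX_holder : ∀ᵐ ω ∂ν, ∀ i ≤ M, ∀ i' ≤ M, |X i ω - X i' ω| ≤ K * |((i : ℝ) - i') / m| ^ α)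
    (hincr : ∀ p k, p < k → k ≤ M →
      ∫⁻ ω, ‖∑ i ∈ Ioc p k, ξ i ω‖ₑ ∂ν ≤ ENNReal.ofReal (C * (((k : ℝ) - p) / m) ^ γ))
    {u v : ℕ} (huv : u ≤ v) (hvM : v ≤ M) :
    ∫⁻ ω, ‖∑ i ∈ Ioc u v, (X i ω - X (u + 1) ω) * ξ i ω‖ₑ ∂ν
      ≤ ENNReal.ofReal (K * C * chainingConst (α + γ) * (((v : ℝ) - u) / m) ^ (α + γ)) := by
  induction h : v - u using Nat.strong_induction_on generalizing u v with
  | _ d ih =>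
  rcases lt_or_ge d 2 with hd | hd
  · have hzero : ∀ ω, ∑ i ∈ Ioc u v, (X i ω - X (u + 1) ω) * ξ i ω = 0 := by
      intro ω
      obtain rfl | rfl : v = u ∨ v = u + 1 := by omega
      · simp
      · simp [Nat.Ioc_succ_singleton]
    simp [hzero]
  set w := u + d / 2
  have huw : u < w := by omega
  have hwv : w < v := by omega
  have hm' : (0 : ℝ) < m := by exact_mod_cast hm
  set x : ℝ := ((w : ℝ) - u) / m with hx_def
  set y : ℝ := ((v : ℝ) - w) / m with hy_def
  have hx : 0 < x := div_pos (by rw [sub_pos]; exact_mod_cast huw) hm'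
  have hy : 0 < y := div_pos (by rw [sub_pos]; exact_mod_cast hwv) hm'
  have hxy : x + y = ((v : ℝ) - u) / m := by ring
  have hsplit : x ≤ 2 / 3 * (x + y) ∧ y ≤ 2 / 3 * (x + y) := by
    have : (3 : ℝ) * w ≤ 2 * v + u ∧ (v : ℝ) + 2 * u ≤ 3 * w := by
      constructor <;> norm_cast <;> omega
    rw [hxy, hx_def, hy_def, ← mul_div_assoc]
    constructor <;> gcongr <;> linarith
  set κ := chainingConst (α + γ)
  have hκ : 0 ≤ κ := (zero_lt_one.trans (one_lt_chainingConst hαγ)).le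
  have hcoef : ∀ᵐ ω ∂ν, ‖X (w + 1) ω - X (u + 1) ω‖ₑ ≤ ENNReal.ofReal (K * x ^ α) := by
    filter_upwards [hX_holder] with ω hω
    rw [Real.enorm_eq_ofReal_abs]
    refine ENNReal.ofReal_le_ofReal ((hω (w + 1) (by omega) (u + 1) (by omega)).trans_eq ?_)
    have hdist : (((w + 1 : ℕ) : ℝ) - ((u + 1 : ℕ) : ℝ)) / m = x := by push_cast; ring
    rw [hdist, abs_of_pos hx]
  calc ∫⁻ ω, ‖∑ i ∈ Ioc u v, (X i ω - X (u + 1) ω) * ξ i ω‖ₑ ∂ν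
      ≤ ∫⁻ ω, ‖∑ i ∈ Ioc u w, (X i ω - X (u + 1) ω) * ξ i ω‖ₑ
          + ‖∑ i ∈ Ioc w v, (X i ω - X (w + 1) ω) * ξ i ω‖ₑ
          + ENNReal.ofReal (K * x ^ α) * ‖∑ i ∈ Ioc w v, ξ i ω‖ₑ ∂ν := by
        refine lintegral_mono_ae (hcoef.mono fun ω hω => ?_)
        rw [sum_Ioc_sub_mul_split (X · ω) (ξ · ω) huw.le hwv.le]
        refine (enorm_add_le _ _).trans ?_
        gcongr
        · exact enorm_add_le _ _
        · rw [enorm_mul]; gcongr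
    _ = ∫⁻ ω, ‖∑ i ∈ Ioc u w, (X i ω - X (u + 1) ω) * ξ i ω‖ₑ ∂ν
          + ∫⁻ ω, ‖∑ i ∈ Ioc w v, (X i ω - X (w + 1) ω) * ξ i ω‖ₑ ∂ν
          + ENNReal.ofReal (K * x ^ α) * ∫⁻ ω, ‖∑ i ∈ Ioc w v, ξ i ω‖ₑ ∂ν := by
        rw [lintegral_add_left (by fun_prop), lintegral_add_left (by fun_prop),
          lintegral_const_mul' _ _ ENNReal.ofReal_ne_top]
    _ ≤ ENNReal.ofReal (K * C * κ * x ^ (α + γ)) + ENNReal.ofReal (K * C * κ * y ^ (α + γ))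
          + ENNReal.ofReal (K * x ^ α) * ENNReal.ofReal (C * y ^ γ) := by
        gcongr
        · exact ih _ (by omega) huw.le (hwv.le.trans hvM) rfl
        · exact ih _ (by omega) hwv.le hvM rfl
        · exact hincr w v hwv hvM
    _ = ENNReal.ofReal (K * C * (κ * x ^ (α + γ) + κ * y ^ (α + γ) + x ^ α * y ^ γ)) := by
        rw [← ENNReal.ofReal_mul (by positivity), ← ENNReal.ofReal_add (by positivity)
          (by positivity), ← ENNReal.ofReal_add (by positivity) (by positivity)]
        ring_nf
    _ ≤ ENNReal.ofReal (K * C * κ * (((v : ℝ) - u) / m) ^ (α + γ)) := by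
        rw [← hxy, mul_assoc (K * C)]
        gcongr
        exact chainingConst_split_le hα hγ hαγ hx hy hsplit.1 hsplit.2

theorem lintegral_enorm_sum_filter_sub_mul_le {f : Ω → ℝ → ℝ} (hf : ∀ t, Measurable (f · t))
    (hξ : ∀ i, Measurable (ξ i)) (hm : 0 < m) (hα : 0 ≤ α) (hγ : 0 ≤ γ) (hαγ : 1 < α + γ)
    (hK : 0 ≤ K) (hC : 0 ≤ C) {P : Set ℝ}
    (hholder : ∀ᵐ ω ∂ν, ∀ s ∈ P, ∀ t ∈ P, |f ω s - f ω t| ≤ K * |s - t| ^ α)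
    (hgrid : ∀ i ≤ M, (i : ℝ) / m ∈ P) {a b : ℝ} (ha : a ∈ P)
    (hincr : ∀ p k, p < k → k ≤ M →
      ∫⁻ ω, ‖∑ i ∈ Ioc p k, ξ i ω‖ₑ ∂ν ≤ ENNReal.ofReal (C * (((k : ℝ) - p) / m) ^ γ)) :
    ∫⁻ ω, ‖∑ i ∈ (Icc 1 M).filter (fun i : ℕ => a ≤ (i : ℝ) / m ∧ (i : ℝ) / m < b),
        (f ω ((i : ℝ) / m) - f ω a) * ξ i ω‖ₑ ∂ν
      ≤ ENNReal.ofReal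
          (K * C * (chainingConst (α + γ) + 1) * (b - a + 1 / m) ^ (α + γ)) := by
  obtain ⟨p, q, hIoc⟩ := filter_Icc_div_mem_Ico_eq_Ioc hm M a b
  rcases le_or_gt q p with hqp | hpq
  · simp [hIoc, Ioc_eq_empty_of_le hqp]
  have hmem : ∀ i ∈ Ioc p q, i ≤ M ∧ a ≤ (i : ℝ) / m ∧ (i : ℝ) / m < b := fun i hi => by
    rw [← hIoc, mem_filter, mem_Icc] at hi
    exact ⟨hi.1.2, hi.2⟩
  obtain ⟨hpM, hpa, hpb⟩ := hmem (p + 1) (by simp; omega)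
  obtain ⟨hqM, -, hqb⟩ := hmem q (by simp; omega)
  have hm' : (0 : ℝ) < m := by exact_mod_cast hm
  set ℓ := b - a + 1 / m
  have hm_inv : (0 : ℝ) < 1 / m := by positivity
  have hℓ : 0 < ℓ := by linarith
  have hlen : ((q : ℝ) - p) / m ≤ ℓ := by
    have : ((q : ℝ) - p) / m = q / m - (p + 1 : ℕ) / m + 1 / m := by push_cast; ring
    linarith
  have hlen0 : 0 ≤ ((q : ℝ) - p) / m :=
    div_nonneg (by rw [sub_nonneg]; exact_mod_cast hpq.le) hm'.le
  set κ := chainingConst (α + γ)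
  have hκ : 0 ≤ κ := (zero_lt_one.trans (one_lt_chainingConst hαγ)).le
  have hcoef : ∀ᵐ ω ∂ν, ‖f ω ((p + 1 : ℕ) / m) - f ω a‖ₑ ≤ ENNReal.ofReal (K * ℓ ^ α) := by
    filter_upwards [hholder] with ω hω
    rw [Real.enorm_eq_ofReal_abs]
    refine ENNReal.ofReal_le_ofReal ((hω _ (hgrid _ hpM) a ha).trans ?_)
    gcongr
    rw [abs_of_nonneg (by linarith)]
    linarith
  have hX_holder : ∀ᵐ ω ∂ν, ∀ i ≤ M, ∀ i' ≤ M,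
      |f ω ((i : ℝ) / m) - f ω ((i' : ℝ) / m)| ≤ K * |((i : ℝ) - i') / m| ^ α := by
    filter_upwards [hholder] with ω hω i hi i' hi'
    rw [sub_div]
    exact hω _ (hgrid i hi) _ (hgrid i' hi')
  rw [hIoc]
  calc ∫⁻ ω, ‖∑ i ∈ Ioc p q, (f ω ((i : ℝ) / m) - f ω a) * ξ i ω‖ₑ ∂ν
      ≤ ∫⁻ ω, ‖∑ i ∈ Ioc p q, (f ω ((i : ℝ) / m) - f ω ((p + 1 : ℕ) / m)) * ξ i ω‖ₑ
          + ENNReal.ofReal (K * ℓ ^ α) * ‖∑ i ∈ Ioc p q, ξ i ω‖ₑ ∂ν := by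
        refine lintegral_mono_ae (hcoef.mono fun ω hω => ?_)
        rw [sum_sub_mul_eq_sum_sub_mul_add _ _ _ _ (f ω ((p + 1 : ℕ) / m))]
        refine (enorm_add_le _ _).trans ?_
        rw [enorm_mul]
        gcongr
    _ = ∫⁻ ω, ‖∑ i ∈ Ioc p q, (f ω ((i : ℝ) / m) - f ω ((p + 1 : ℕ) / m)) * ξ i ω‖ₑ ∂ν
          + ENNReal.ofReal (K * ℓ ^ α) * ∫⁻ ω, ‖∑ i ∈ Ioc p q, ξ i ω‖ₑ ∂ν := by
        rw [lintegral_add_left (by fun_prop), lintegral_const_mul' _ _ ENNReal.ofReal_ne_top]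
    _ ≤ ENNReal.ofReal (K * C * κ * ℓ ^ (α + γ))
          + ENNReal.ofReal (K * ℓ ^ α) * ENNReal.ofReal (C * ℓ ^ γ) := by
        gcongr
        · refine (lintegral_enorm_sum_Ioc_sub_mul_le (X := fun i ω => f ω ((i : ℝ) / m))
            (fun i => hf _) hξ hm hα hγ hαγ hK hC hX_holder hincr hpq.le hqM).trans ?_
          gcongr
        · refine (hincr p q hpq hqM).trans ?_
          gcongr
    _ = ENNReal.ofReal (K * C * (κ + 1) * ℓ ^ (α + γ)) := by
        rw [← ENNReal.ofReal_mul (by positivity), ← ENNReal.ofReal_add (by positivity)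
          (by positivity), Real.rpow_add hℓ]
        ring_nf

end Chaining

section Holder

variable {Ω : Type*} [MeasurableSpace Ω] {μ : Measure Ω} {f : Ω → ℝ → ℝ} {P : Set ℝ} {α : ℝ}

def holderSet (f : Ω → ℝ → ℝ) (P : Set ℝ) (α K : ℝ) : Set Ω :=
  {ω | ∀ s ∈ P, ∀ t ∈ P, |f ω s - f ω t| ≤ K * |s - t| ^ α}

theorem measurableSet_holderSet (hf : ∀ t, Measurable (f · t)) (hP : P.Countable) (K : ℝ) :
    MeasurableSet (holderSet f P α K) := by
  have : holderSet f P α K = ⋂ s ∈ P, ⋂ t ∈ P, {ω | |f ω s - f ω t| ≤ K * |s - t| ^ α} := by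
    ext; simp [holderSet]
  rw [this]
  exact .biInter hP fun s _ => .biInter hP fun t _ =>
    measurableSet_le ((hf s).sub (hf t)).abs measurable_const

theorem tendsto_measure_compl_holderSet [IsFiniteMeasure μ] (hf : ∀ t, Measurable (f · t))
    (hP : P.Countable)
    (hholder : ∀ᵐ ω ∂μ, ∃ H : ℝ, ∀ s ∈ P, ∀ t ∈ P, |f ω s - f ω t| ≤ H * |s - t| ^ α) :
    Tendsto (fun K : ℕ => μ (holderSet f P α K)ᶜ) atTop (𝓝 0) := by
  have hanti : Antitone fun K : ℕ => (holderSet f P α K)ᶜ := fun K K' hKK' =>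
    Set.compl_subset_compl.mpr fun ω hω s hs t ht => (hω s hs t ht).trans (by gcongr)
  have hnull : μ (⋂ K : ℕ, (holderSet f P α K)ᶜ) = 0 := by
    refine measure_mono_null ?_ (ae_iff.mp hholder)
    rintro ω hω ⟨H, hH⟩
    refine Set.mem_iInter.mp hω ⌈H⌉₊ fun s hs t ht => (hH s hs t ht).trans ?_
    gcongr
    exact Nat.le_ceil H
  simpa [Function.comp_def, hnull] using tendsto_measure_iInter_atTop
    (fun K => (measurableSet_holderSet hf hP _).compl.nullMeasurableSet) hanti
    ⟨0, measure_ne_top μ _⟩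

end Holder

theorem iSup_abs_sum_Icc_floor_le (b : ℕ → ℝ) (n : ℕ) (T : ℝ) :
    ⨆ t : Set.Icc (0 : ℝ) T, |∑ j ∈ Icc 1 ⌊(n : ℝ) * t⌋₊, b j|
      ≤ ∑ j ∈ Icc 1 ⌊(n : ℝ) * T⌋₊, |b j| := by
  refine Real.iSup_le (fun t => ?_) (sum_nonneg fun _ _ => abs_nonneg _)
  have hfloor : ⌊(n : ℝ) * t⌋₊ ≤ ⌊(n : ℝ) * T⌋₊ :=
    Nat.floor_le_floor (mul_le_mul_of_nonneg_left t.2.2 n.cast_nonneg)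
  exact (abs_sum_le_sum_abs _ _).trans (sum_le_sum_of_subset_of_nonneg
    (Icc_subset_Icc le_rfl hfloor) fun _ _ _ => abs_nonneg _)

theorem natCast_div_mem_Icc_inter_range_ratCast {T : ℝ} (hT : 0 ≤ T) {k m : ℕ}
    (hk : k ≤ ⌊(m : ℝ) * T⌋₊) :
    (k : ℝ) / m ∈ Set.Icc 0 T ∩ Set.range ((↑) : ℚ → ℝ) := by
  refine ⟨⟨by positivity, div_le_of_le_mul₀ m.cast_nonneg hT ?_⟩, ⟨k / m, by push_cast; rfl⟩⟩
  calc (k : ℝ) ≤ ⌊(m : ℝ) * T⌋₊ := by exact_mod_cast hk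
    _ ≤ m * T := Nat.floor_le (by positivity)
    _ = T * m := mul_comm _ _

theorem measure_lt_le_measure_compl_add_setLIntegral_div {Ω : Type*} [MeasurableSpace Ω]
    {μ : Measure Ω} {A : Set Ω} (hA : MeasurableSet A) {S : Ω → ℝ} {Y : Ω → ℝ≥0∞}
    (hY : Measurable Y) (hSY : ∀ ω, ENNReal.ofReal (S ω) ≤ Y ω) {ε : ℝ} (hε : 0 < ε) :
    μ {ω | ε < S ω} ≤ μ Aᶜ + (∫⁻ ω in A, Y ω ∂μ) / ENNReal.ofReal ε := by
  calc μ {ω | ε < S ω} ≤ μ (Aᶜ ∪ {ω | ENNReal.ofReal ε ≤ Y ω} ∩ A) := by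
        refine measure_mono fun ω hω => ?_
        by_cases hωA : ω ∈ A
        · exact Or.inr ⟨(ENNReal.ofReal_le_ofReal (le_of_lt hω)).trans (hSY ω), hωA⟩
        · exact Or.inl hωA
    _ ≤ μ Aᶜ + μ.restrict A {ω | ENNReal.ofReal ε ≤ Y ω} := by
        rw [Measure.restrict_apply' hA]
        exact measure_union_le _ _
    _ ≤ μ Aᶜ + (∫⁻ ω in A, Y ω ∂μ) / ENNReal.ofReal ε := by
        gcongr
        exact meas_ge_le_lintegral_div hY.aemeasurable (by simpa using hε) ENNReal.ofReal_ne_top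

section Main

variable {Ω : Type*} [MeasurableSpace Ω] {μ : Measure Ω} {f : Ω → ℝ → ℝ} {ξ : ℕ → Ω → ℝ}
  {T α γ C : ℝ} {n m : ℕ}

/-- The summand of `R_{n,m}` indexed by the block `I_n(j)`. -/
noncomputable def blockSum (f : Ω → ℝ → ℝ) (ξ : ℕ → Ω → ℝ) (T : ℝ) (n m j : ℕ) (ω : Ω) : ℝ :=
  ∑ i ∈ (Icc 1 ⌊(m : ℝ) * T⌋₊).filter
      (fun i : ℕ => ((j : ℝ) - 1) / n ≤ (i : ℝ) / m ∧ (i : ℝ) / m < (j : ℝ) / n),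
    (f ω ((i : ℝ) / m) - f ω (((j : ℝ) - 1) / n)) * ξ i ω

theorem measure_lt_iSup_abs_sum_blockSum_le (hT : 0 ≤ T) (hf : ∀ t, Measurable (f · t))
    (hξ : ∀ i, Measurable (ξ i)) (hα : 0 ≤ α) (hγ : 0 ≤ γ) (hαγ : 1 < α + γ) (hC : 0 ≤ C)
    (hincr : ∀ p k, p < k → k ≤ ⌊(m : ℝ) * T⌋₊ →
      ∫⁻ ω, ‖∑ i ∈ Ioc p k, ξ i ω‖ₑ ∂μ ≤ ENNReal.ofReal (C * (((k : ℝ) - p) / m) ^ γ))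
    (K : ℕ) (hn : 0 < n) (hnm : n ≤ m) {ε : ℝ} (hε : 0 < ε) :
    μ {ω | ε < ⨆ t : Set.Icc (0 : ℝ) T, |∑ j ∈ Icc 1 ⌊(n : ℝ) * t⌋₊, blockSum f ξ T n m j ω|}
      ≤ μ (holderSet f (Set.Icc 0 T ∩ Set.range ((↑) : ℚ → ℝ)) α K)ᶜ
        + ENNReal.ofReal (T * (K * C * (chainingConst (α + γ) + 1)) * (n * (2 / n) ^ (α + γ)))
          / ENNReal.ofReal ε := by
  set P := Set.Icc 0 T ∩ Set.range ((↑) : ℚ → ℝ)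
  set A := holderSet f P α K
  have hA : MeasurableSet A :=
    measurableSet_holderSet hf ((Set.countable_range ((↑) : ℚ → ℝ)).mono Set.inter_subset_right) K
  have hn' : (0 : ℝ) < n := by exact_mod_cast hn
  have hκ : 0 ≤ chainingConst (α + γ) := (zero_lt_one.trans (one_lt_chainingConst hαγ)).le
  set N := ⌊(n : ℝ) * T⌋₊
  set D := K * C * (chainingConst (α + γ) + 1) * (2 / n) ^ (α + γ) with hD
  have hD0 : 0 ≤ D := by positivity
  have hblock : ∀ j ∈ Icc 1 N, ∫⁻ ω in A, ‖blockSum f ξ T n m j ω‖ₑ ∂μ ≤ ENNReal.ofReal D := by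
    intro j hj
    rw [mem_Icc] at hj
    have ha : ((j : ℝ) - 1) / n ∈ P := by
      have := natCast_div_mem_Icc_inter_range_ratCast hT (k := j - 1) (m := n) (by omega)
      rwa [Nat.cast_sub hj.1, Nat.cast_one] at this
    refine (lintegral_enorm_sum_filter_sub_mul_le hf hξ (hn.trans_le hnm) hα hγ hαγ
      K.cast_nonneg hC (ae_restrict_of_forall_mem hA fun ω hω => hω)
      (fun i hi => natCast_div_mem_Icc_inter_range_ratCast hT hi) ha
      (fun p k hpk hk => (setLIntegral_le_lintegral _ _).trans (hincr p k hpk hk))).trans ?_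
    have hm : (1 : ℝ) / m ≤ 1 / n := one_div_le_one_div_of_le hn' (by exact_mod_cast hnm)
    rw [← sub_div, sub_sub_cancel, hD]
    gcongr
    linarith [show (2 : ℝ) / n = 1 / n + 1 / n by ring]
  have hsum : ∫⁻ ω in A, ∑ j ∈ Icc 1 N, ‖blockSum f ξ T n m j ω‖ₑ ∂μ ≤ ENNReal.ofReal (N * D) := by
    rw [lintegral_finsetSum _ fun j _ => by unfold blockSum; fun_prop]
    calc _ ≤ ∑ j ∈ Icc 1 N, ENNReal.ofReal D := sum_le_sum hblock
      _ = ENNReal.ofReal (N * D) := by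
        rw [sum_const, Nat.card_Icc, nsmul_eq_mul, ENNReal.ofReal_mul N.cast_nonneg,
          ENNReal.ofReal_natCast, Nat.add_sub_cancel]
  calc _ ≤ μ Aᶜ + (∫⁻ ω in A, ∑ j ∈ Icc 1 N, ‖blockSum f ξ T n m j ω‖ₑ ∂μ) / ENNReal.ofReal ε := by
        refine measure_lt_le_measure_compl_add_setLIntegral_div hA
          (by unfold blockSum; fun_prop) (fun ω => ?_) hε
        simp_rw [Real.enorm_eq_ofReal_abs]
        rw [← ENNReal.ofReal_sum_of_nonneg fun _ _ => abs_nonneg _]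
        exact ENNReal.ofReal_le_ofReal (iSup_abs_sum_Icc_floor_le _ n T)
    _ ≤ _ := by
        gcongr
        refine hsum.trans (ENNReal.ofReal_le_ofReal ?_)
        calc (N : ℝ) * D ≤ n * T * D := by gcongr; exact Nat.floor_le (by positivity)
          _ = _ := by ring

end Main

theorem tendsto_limsup_atTop_of_le_add {a : ℕ → ℕ → ℝ≥0∞} {b : ℕ → ℝ≥0∞}
    {c : ℕ → ℕ → ℝ≥0∞} (hb : Tendsto b atTop (𝓝 0)) (hc : ∀ K, Tendsto (c K) atTop (𝓝 0))
    (hle : ∀ K, ∀ᶠ n in atTop, ∀ᶠ m in atTop, a n m ≤ b K + c K n) :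
    Tendsto (fun n => limsup (a n) atTop) atTop (𝓝 0) := by
  refine ENNReal.tendsto_nhds_zero.mpr fun δ hδ => ?_
  have hδ2 : 0 < δ / 2 := ENNReal.half_pos hδ.ne'
  obtain ⟨K, hK⟩ := (ENNReal.tendsto_nhds_zero.mp hb (δ / 2) hδ2).exists
  filter_upwards [hle K, ENNReal.tendsto_nhds_zero.mp (hc K) (δ / 2) hδ2] with n hn hcn
  refine limsup_le_of_le (by isBoundedDefault) (hn.mono fun m hm => hm.trans ?_)
  calc b K + c K n ≤ δ / 2 + δ / 2 := add_le_add hK hcn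
    _ = δ := ENNReal.add_halves δ

theorem tendsto_natCast_mul_two_div_rpow {s : ℝ} (hs : 1 < s) :
    Tendsto (fun n : ℕ => (n : ℝ) * (2 / n) ^ s) atTop (𝓝 0) := by
  have hpow := ((tendsto_rpow_neg_atTop (y := s - 1) (by linarith)).comp
    tendsto_natCast_atTop_atTop).const_mul ((2 : ℝ) ^ s)
  rw [mul_zero] at hpow
  refine hpow.congr' ((eventually_gt_atTop 0).mono fun n hn => ?_)
  have hn' : (0 : ℝ) < n := by exact_mod_cast hn
  show (2 : ℝ) ^ s * (n : ℝ) ^ (-(s - 1)) = n * (2 / n) ^ s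
  rw [Real.div_rpow (by norm_num) hn'.le, Real.rpow_neg hn'.le, Real.rpow_sub hn', Real.rpow_one]
  field_simp

theorem stmt_13_general (T α : ℝ) (hT : 0 < T) (hα : 1 / 2 < α)
    (Ω : Type) (m0 : MeasurableSpace Ω) (μ : Measure Ω) (hμ : IsProbabilityMeasure μ)
    (ξ : ℕ → ℕ → Ω → ℝ) (hmeas : ∀ m i : ℕ, Measurable (ξ m i))
    (C₀ : ℝ) (hC₀ : 0 < C₀)
    (hH2 : ∀ m : ℕ, 1 ≤ m → ∀ j k : ℕ, j < k → k ≤ ⌊(m : ℝ) * T⌋₊ →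
      (∫⁻ ω, ENNReal.ofReal (|∑ i ∈ Finset.Icc (j + 1) k, ξ m i ω| ^ 4) ∂μ)
        ≤ ENNReal.ofReal (C₀ * (((k : ℝ) - (j : ℝ)) / m) ^ 2))
    (f : Ω → ℝ → ℝ) (hfmeas : ∀ t : ℝ, Measurable fun ω => f ω t)
    (hfHolder : ∀ᵐ ω ∂μ, ∃ H : ℝ, ∀ u ∈ Set.Icc (0 : ℝ) T, ∀ v ∈ Set.Icc (0 : ℝ) T,
      |f ω u - f ω v| ≤ H * |u - v| ^ α) :
    ∀ ε : ℝ, 0 < ε →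
      Tendsto (fun n : ℕ =>
        limsup (fun m : ℕ =>
          μ {ω : Ω | ε < ⨆ t : Set.Icc (0 : ℝ) T,
            |∑ j ∈ Finset.Icc 1 ⌊(n : ℝ) * (t : ℝ)⌋₊,
              ∑ i ∈ (Finset.Icc 1 ⌊(m : ℝ) * T⌋₊).filter
                  (fun i : ℕ => ((j : ℝ) - 1) / n ≤ (i : ℝ) / m ∧ (i : ℝ) / m < (j : ℝ) / n),
                (f ω ((i : ℝ) / m) - f ω (((j : ℝ) - 1) / n)) * ξ m i ω|}) atTop)
        atTop (nhds 0) := by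
  intro ε hε
  have hincr : ∀ m : ℕ, 1 ≤ m → ∀ p k : ℕ, p < k → k ≤ ⌊(m : ℝ) * T⌋₊ →
      ∫⁻ ω, ‖∑ i ∈ Ioc p k, ξ m i ω‖ₑ ∂μ
        ≤ ENNReal.ofReal (C₀ ^ (1 / 4 : ℝ) * (((k : ℝ) - p) / m) ^ (1 / 2 : ℝ)) := by
    intro m hm p k hpk hk
    have hkp : (0 : ℝ) ≤ ((k : ℝ) - p) / m :=
      div_nonneg (sub_nonneg.mpr (by exact_mod_cast hpk.le)) m.cast_nonneg
    refine lintegral_enorm_le_of_lintegral_pow_four_le (by fun_prop) hC₀.le hkp ?_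
    rw [← Icc_add_one_left_eq_Ioc]
    exact hH2 m hm p k hpk hk
  refine tendsto_limsup_atTop_of_le_add
    (c := fun K n => ENNReal.ofReal (T * (K * C₀ ^ (1 / 4 : ℝ) * (chainingConst (α + 1 / 2) + 1))
      * (n * (2 / n) ^ (α + 1 / 2))) / ENNReal.ofReal ε)
    (tendsto_measure_compl_holderSet hfmeas
      ((Set.countable_range ((↑) : ℚ → ℝ)).mono Set.inter_subset_right)
      (hfHolder.mono fun ω ⟨H, hH⟩ => ⟨H, fun s hs t ht => hH s hs.1 t ht.1⟩))
    (fun K => ?_) (fun K => ?_)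
  · have h := ENNReal.Tendsto.div_const (ENNReal.tendsto_ofReal
      ((tendsto_natCast_mul_two_div_rpow (s := α + 1 / 2) (by linarith)).const_mul
        (T * (K * C₀ ^ (1 / 4 : ℝ) * (chainingConst (α + 1 / 2) + 1)))))
      (Or.inr (ENNReal.ofReal_pos.mpr hε).ne')
    simpa using h
  · filter_upwards [eventually_gt_atTop 0] with n hn
    filter_upwards [eventually_ge_atTop n] with m hnm
    exact measure_lt_iSup_abs_sum_blockSum_le hT.le hfmeas (hmeas m) (by linarith) (by norm_num)
      (by linarith) (by positivity) (hincr m (by omega)) K hn hnm hε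

/-- Key convergence (vancov): for `T > 0`, `α ∈ (1/2,1]`, random weights `ξ_{i,m}`
satisfying (H2) and a process `f` with measurable marginals and a.e. α-Hölder paths,
`lim_{n→∞} limsup_{m→∞} P( sup_{t ∈ [0,T]} |R_{n,m}(t)| > ε ) = 0` for every `ε > 0`,
where `R_{n,m}(t) = ∑_{j=1}^{⌊nt⌋} ∑_{i ∈ I_n(j)} (f(·,t_i) - f(·,u_{j-1})) ξ_{i,m}`. -/
theorem stmt_13 (T α : ℝ) (hT : 0 < T) (hα : 1 / 2 < α) (hα1 : α ≤ 1)
    (Ω : Type) (m0 : MeasurableSpace Ω) (μ : Measure Ω) (hμ : IsProbabilityMeasure μ)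
    (ξ : ℕ → ℕ → Ω → ℝ) (hmeas : ∀ m i : ℕ, Measurable (ξ m i))
    (C₀ : ℝ) (hC₀ : 0 < C₀)
    (hH2 : ∀ m : ℕ, 1 ≤ m → ∀ j k : ℕ, j < k → k ≤ ⌊(m : ℝ) * T⌋₊ →
      (∫⁻ ω, ENNReal.ofReal (|∑ i ∈ Finset.Icc (j + 1) k, ξ m i ω| ^ 4) ∂μ)
        ≤ ENNReal.ofReal (C₀ * (((k : ℝ) - (j : ℝ)) / m) ^ 2))
    (f : Ω → ℝ → ℝ) (hfmeas : ∀ t : ℝ, Measurable fun ω => f ω t)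
    (hfHolder : ∀ᵐ ω ∂μ, ∃ H : ℝ, ∀ u ∈ Set.Icc (0 : ℝ) T, ∀ v ∈ Set.Icc (0 : ℝ) T,
      |f ω u - f ω v| ≤ H * |u - v| ^ α) :
    ∀ ε : ℝ, 0 < ε →
      Tendsto (fun n : ℕ =>
        limsup (fun m : ℕ =>
          μ {ω : Ω | ε < ⨆ t : Set.Icc (0 : ℝ) T,
            |∑ j ∈ Finset.Icc 1 ⌊(n : ℝ) * (t : ℝ)⌋₊,
              ∑ i ∈ (Finset.Icc 1 ⌊(m : ℝ) * T⌋₊).filter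
                  (fun i : ℕ => ((j : ℝ) - 1) / n ≤ (i : ℝ) / m ∧ (i : ℝ) / m < (j : ℝ) / n),
                (f ω ((i : ℝ) / m) - f ω (((j : ℝ) - 1) / n)) * ξ m i ω|}) atTop)
        atTop (nhds 0) :=
  stmt_13_general T α hT hα Ω m0 μ hμ ξ hmeas C₀ hC₀ hH2 f hfmeas hfHolder
end
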